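/- Let s₁ ≥ s₂ and s̃₂ ≤ s₂ be real numbers, and let B > 0 with B ≥ e^{s₁} + e^{s₂}. If e^{s₂} ≤ 2·e^{s̃₂}, then (e^{s₂} − e^{s̃₂})/(B − e^{s₂} + e^{s̃₂}) ≤ e^{s₁}/B. -/

import Mathlib

/-!
Write `a = e^{s₁}`, `b = e^{s₂}`, `c = e^{s̃₂}`. After clearing denominators the claim is
`a (b - c) ≤ B (a + c - b)`, whose right side is increasing in `B`, so it suffices to take
`B = a + b`. There the difference of the two sides is `a (a - b) + c (2a + b) - b²`, and
`b ≤ 2c` makes `c (2a + b) ≥ 3bc ≥ b²`.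
-/

section

variable {K : Type*} [Field K] [LinearOrder K] [IsStrictOrderedRing K] {a b c B : K}

theorem mul_sub_le_mul_add_sub (hb : 0 < b) (hba : b ≤ a) (hbc : b ≤ 2 * c)
    (hB : a + b ≤ B) : a * (b - c) ≤ B * (a + c - b) :=
  calc a * (b - c) ≤ (a + b) * (a + c - b) := by
        nlinarith [mul_le_mul_of_nonneg_left hbc hb.le, mul_le_mul_of_nonneg_left hba hb.le]
    _ ≤ B * (a + c - b) := mul_le_mul_of_nonneg_right hB (by linarith)

theorem sub_div_sub_add_le_div (hb : 0 < b) (hba : b ≤ a) (hbc : b ≤ 2 * c)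
    (hB : a + b ≤ B) : (b - c) / (B - b + c) ≤ a / B := by
  have hden : 0 < B - b + c := by linarith
  rw [div_le_div_iff₀ hden (by linarith)]
  linarith [mul_sub_le_mul_add_sub hb hba hbc hB]

end

theorem deltaEnergy_top2_key_ineq_general (s₁ s₂ st₂ B : ℝ) (h12 : s₂ ≤ s₁)
    (hBe : Real.exp s₁ + Real.exp s₂ ≤ B)
    (hcond : Real.exp s₂ ≤ 2 * Real.exp st₂) :
    (Real.exp s₂ - Real.exp st₂) / (B - Real.exp s₂ + Real.exp st₂) ≤
      Real.exp s₁ / B :=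
  sub_div_sub_add_le_div (Real.exp_pos s₂) (Real.exp_le_exp.mpr h12) hcond hBe

theorem deltaEnergy_top2_key_ineq (s₁ s₂ st₂ B : ℝ) (h12 : s₂ ≤ s₁) (h2 : st₂ ≤ s₂)
    (hB : 0 < B) (hBe : Real.exp s₁ + Real.exp s₂ ≤ B)
    (hcond : Real.exp s₂ ≤ 2 * Real.exp st₂) :
    (Real.exp s₂ - Real.exp st₂) / (B - Real.exp s₂ + Real.exp st₂) ≤
      Real.exp s₁ / B :=
  deltaEnergy_top2_key_ineq_general s₁ s₂ st₂ B h12 hBe hcond
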